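/- Let Θ(r_1,…,r_{d−1}) denote the set of tensors in ℝ^{p_1×⋯×p_d} whose j-th sequential matricization has rank at most r_j for every 1 ≤ j ≤ d−1, and let P_{Θ(r_1′,…,r_{d−1}′)} be the approximate projection defined by sequential rank truncation. Suppose X ∈ Θ(r_1″,…,r_{d−1}″), Y ∈ Θ(r_1,…,r_{d−1}), and r_i < r_i′ < r_i″ for all 1 ≤ i ≤ d−1. Then ‖P_{Θ(r_1′,…,r_{d−1}′)}(X) − X‖_F ≤ [∏_{i=1}^{d−1}(β_i + 1) − 1]·‖Y − X‖_F, where β_i = √((r_i″ − r_i′)/(r_i″ − r_i)). -/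

import Mathlib

open scoped BigOperators
open MeasureTheory ProbabilityTheory Filter

namespace TTpaper

/-- A real tensor of order `d` with dimension vector `p`. -/
abbrev Tensor {d : ℕ} (p : Fin d → ℕ) : Type := ((k : Fin d) → Fin (p k)) → ℝ

/-- Frobenius norm of a tensor. -/
noncomputable def fnorm {d : ℕ} {p : Fin d → ℕ} (X : Tensor p) : ℝ :=
  Real.sqrt (∑ i, X i ^ 2)

/-- Inner product of two tensors of the same size (sum of entrywise products). -/
noncomputable def tinner {d : ℕ} {p : Fin d → ℕ} (X Y : Tensor p) : ℝ :=
  ∑ i, X i * Y i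

/-- The `k`-th sequential matricization of a tensor: rows enumerate the indices of
modes `1,…,k` and columns enumerate the indices of modes `k+1,…,d`. -/
def seqMat {d : ℕ} (p : Fin d → ℕ) (k : ℕ) (X : Tensor p) :
    Matrix ((j : {j : Fin d // j.val < k}) → Fin (p j.1))
      ((j : {j : Fin d // ¬ j.val < k}) → Fin (p j.1)) ℝ :=
  fun a b => X fun j => if h : j.val < k then a ⟨j, h⟩ else b ⟨j, h⟩

/-- The entries of the tensor-train chain product
`G_1(i_1) G_2(i_2) ⋯ G_d(i_d)`, written as a sum over all bond indices. -/
noncomputable def ttEntry {d : ℕ} (p : Fin d → ℕ) (r : Fin (d + 1) → ℕ)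
    (G : (k : Fin d) → Fin (p k) → Fin (r k.castSucc) → Fin (r k.succ) → ℝ) : Tensor p :=
  fun i => ∑ a : (j : Fin (d + 1)) → Fin (r j),
    ∏ k : Fin d, G k (i k) (a k.castSucc) (a k.succ)

/-- `X` is in tensor-train format with bond dimension vector `r`
(whose boundary entries equal `1`). -/
def IsTT {d : ℕ} (p : Fin d → ℕ) (r : Fin (d + 1) → ℕ) (X : Tensor p) : Prop :=
  r 0 = 1 ∧ r (Fin.last d) = 1 ∧ ∃ G, X = ttEntry p r G

/-- Merge an index for the first `n` modes and an index for the last `m` modes into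
an index for a tensor with appended dimension vector. -/
def splice {n m : ℕ} {q : Fin n → ℕ} {p : Fin m → ℕ}
    (a : (j : Fin n) → Fin (q j)) (b : (i : Fin m) → Fin (p i)) :
    (j : Fin (n + m)) → Fin (Fin.append q p j) :=
  Fin.addCases (motive := fun j => Fin (Fin.append q p j))
    (fun i => Fin.cast (Fin.append_left q p i).symm (a i))
    (fun i => Fin.cast (Fin.append_right q p i).symm (b i))

/-- The part of an index of an appended tensor corresponding to the first block of modes. -/
def unleft {n m : ℕ} {q : Fin n → ℕ} {p : Fin m → ℕ}
    (idx : (j : Fin (n + m)) → Fin (Fin.append q p j)) (i : Fin n) : Fin (q i) :=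
  Fin.cast (Fin.append_left q p i) (idx (Fin.castAdd m i))

/-- The part of an index of an appended tensor corresponding to the second block of modes. -/
def unright {n m : ℕ} {q : Fin n → ℕ} {p : Fin m → ℕ}
    (idx : (j : Fin (n + m)) → Fin (Fin.append q p j)) (i : Fin m) : Fin (p i) :=
  Fin.cast (Fin.append_right q p i) (idx (Fin.natAdd n i))

/-- Generalized inner product `⟨A, X⟩` of a coefficient tensor
`A ∈ ℝ^{q_1×⋯×q_n×p_1×⋯×p_m}` with a tensor `X ∈ ℝ^{p_1×⋯×p_m}`. -/
noncomputable def ginner {n m : ℕ} {q : Fin n → ℕ} {p : Fin m → ℕ}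
    (A : Tensor (Fin.append q p)) (X : Tensor p) : Tensor q :=
  fun j => ∑ i, A (splice j i) * X i

/-- The matricization of an appended tensor separating the two blocks of modes. -/
def gmat {n m : ℕ} {q : Fin n → ℕ} {p : Fin m → ℕ} (A : Tensor (Fin.append q p)) :
    Matrix ((j : Fin n) → Fin (q j)) ((i : Fin m) → Fin (p i)) ℝ :=
  fun a b => A (splice a b)

/-- The rearrangement `M(A)` of an appended tensor reversing the order of the
modes of its second block. -/
def modeRev {n m : ℕ} {q : Fin n → ℕ} {p : Fin m → ℕ} (A : Tensor (Fin.append q p)) :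
    Tensor (Fin.append q (fun i => p i.rev)) :=
  fun idx => A (splice (unleft idx)
    (fun i => Fin.cast (congrArg p (Fin.rev_rev i)) (unright idx i.rev)))

/-- Convert a row index of the `n`-th sequential matricization of an appended tensor
into an index over the first block of modes. -/
def unrow {n m : ℕ} {q : Fin n → ℕ} {p : Fin m → ℕ}
    (a : (j : {j : Fin (n + m) // j.val < n}) → Fin (Fin.append q p j.1)) (j : Fin n) :
    Fin (q j) :=
  Fin.cast (Fin.append_left q p j) (a ⟨Fin.castAdd m j, j.isLt⟩)

/-- Convert a column index of the `n`-th sequential matricization of an appended tensor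
into an index over the second block of modes. -/
def uncol {n m : ℕ} {q : Fin n → ℕ} {p : Fin m → ℕ}
    (b : (j : {j : Fin (n + m) // ¬ j.val < n}) → Fin (Fin.append q p j.1)) (i : Fin m) :
    Fin (p i) :=
  Fin.cast (Fin.append_right q p i)
    (b ⟨Fin.natAdd n i, Nat.not_lt.mpr (Nat.le_add_right n i.val)⟩)

/-- Dimension vector `(L, p_1, …, p_d)` of a stacked tensor. -/
def consDim {d : ℕ} (L : ℕ) (p : Fin d → ℕ) : Fin (d + 1) → ℕ :=
  Fin.cons (α := fun _ => ℕ) L p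

/-- Head (lag) component of an index of a stacked tensor with dimensions `(L, p_1, …, p_d)`. -/
def headIdx {d L : ℕ} {p : Fin d → ℕ}
    (idx : (j : Fin (d + 1)) → Fin (consDim L p j)) : Fin L :=
  Fin.cast (Fin.cons_zero (α := fun _ => ℕ) L p) (idx 0)

/-- Tail component of an index of a stacked tensor with dimensions `(L, p_1, …, p_d)`. -/
def tailIdx {d L : ℕ} {p : Fin d → ℕ}
    (idx : (j : Fin (d + 1)) → Fin (consDim L p j)) (k : Fin d) : Fin (p k) :=
  Fin.cast (Fin.cons_succ (α := fun _ => ℕ) L p k) (idx k.succ)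

/-- Build an index of a stacked tensor with dimensions `(L, p_1, …, p_d)` from a lag
and an index over `(p_1, …, p_d)`. -/
def consIdx {d L : ℕ} {p : Fin d → ℕ} (h : Fin L) (b : (k : Fin d) → Fin (p k)) :
    (j : Fin (d + 1)) → Fin (consDim L p j) :=
  fun j => Fin.cases (motive := fun j => Fin (consDim L p j))
    (Fin.cast (Fin.cons_zero (α := fun _ => ℕ) L p).symm h)
    (fun k => Fin.cast (Fin.cons_succ (α := fun _ => ℕ) L p k).symm (b k)) j

/-- The `j`-th lag coefficient tensor `A_j` sliced out of a stacked coefficient tensor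
`A_{1:p} ∈ ℝ^{p_1×⋯×p_d×L×p_1×⋯×p_d}`. -/
def lagSlice {d L : ℕ} {p : Fin d → ℕ}
    (A : Tensor (Fin.append p (consDim L p))) (h : Fin L) :
    Tensor (Fin.append p p) :=
  fun idx => A (splice (unleft idx) (consIdx h (unright idx)))

/-- Squared Frobenius norm of a matrix. -/
noncomputable def mfnormSq {I J : Type*} [Fintype I] [Fintype J] (M : Matrix I J ℝ) : ℝ :=
  ∑ i, ∑ j, M i j ^ 2

/-- Frobenius norm of a matrix. -/
noncomputable def mfnorm {I J : Type*} [Fintype I] [Fintype J] (M : Matrix I J ℝ) : ℝ :=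
  Real.sqrt (mfnormSq M)

/-- The minimal squared Frobenius distance of `M` to the matrices of rank at most `k`,
i.e. the sum of its squared singular values of index `> k`. -/
noncomputable def tailSq {I J : Type*} [Fintype I] [Fintype J]
    (M : Matrix I J ℝ) (k : ℕ) : ℝ :=
  sInf {x | ∃ C : Matrix I J ℝ, C.rank ≤ k ∧ x = mfnormSq (M - C)}

/-- The `r`-th largest singular value of a matrix (for `r ≥ 1`). -/
noncomputable def singval {I J : Type*} [Fintype I] [Fintype J]
    (M : Matrix I J ℝ) (r : ℕ) : ℝ :=
  Real.sqrt (tailSq M (r - 1) - tailSq M r)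

/-- The set of Rayleigh-quotient values `re(v* Ā(z)A(z) v)` over unit `z ∈ ℂ` and unit
vectors `v`; its infimum is `μ_min` and its supremum is `μ_max` of the matrix
polynomial `A(z) = Φ z`. -/
noncomputable def muQuadSet {I : Type*} [Fintype I] (Φ : ℂ → Matrix I I ℂ) : Set ℝ :=
  {x | ∃ z : ℂ, ‖z‖ = 1 ∧ ∃ v : I → ℂ, (∑ i, Complex.normSq (v i)) = 1 ∧
    x = (dotProduct (star v) (((Φ z).conjTranspose * Φ z).mulVec v)).re}

/-- The matrix polynomial `A(z) = I - z·A` of a lag-one autoregression. -/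
noncomputable def arPoly {I : Type*} [Fintype I] [DecidableEq I]
    (M : Matrix I I ℝ) (z : ℂ) : Matrix I I ℂ :=
  1 - z • M.map (Complex.ofReal)

/-- `μ_min` of a lag-one autoregression coefficient matrix. -/
noncomputable def muMin {I : Type*} [Fintype I] [DecidableEq I] (M : Matrix I I ℝ) : ℝ :=
  sInf (muQuadSet (arPoly M))

/-- `μ_max` of a lag-one autoregression coefficient matrix. -/
noncomputable def muMax {I : Type*} [Fintype I] [DecidableEq I] (M : Matrix I I ℝ) : ℝ :=
  sSup (muQuadSet (arPoly M))

/-- All complex eigenvalues of the real matrix `M` have modulus `< 1`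
(spectral radius strictly less than one). -/
def SpecLT1 {I : Type*} [Fintype I] [DecidableEq I] (M : Matrix I I ℝ) : Prop :=
  ∀ z ∈ spectrum ℂ (M.map (Complex.ofReal)), ‖z‖ < 1

/-- A random vector is `c`-sub-Gaussian: its moment generating function satisfies
`E exp⟨u, x⟩ ≤ exp(c‖u‖²/2)` for all `u`. -/
def SubGVec {Ω : Type*} [MeasurableSpace Ω] (μ : Measure Ω) {I : Type*} [Fintype I]
    (c : ℝ) (x : Ω → I → ℝ) : Prop :=
  ∀ u : I → ℝ, ∫ ω, Real.exp (∑ i, u i * x ω i) ∂μ ≤ Real.exp (c * (∑ i, u i ^ 2) / 2)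

/-- A random variable is `c`-sub-Gaussian. -/
def SubGScalar {Ω : Type*} [MeasurableSpace Ω] (μ : Measure Ω) (c : ℝ) (ξ : Ω → ℝ) : Prop :=
  ∀ u : ℝ, ∫ ω, Real.exp (u * ξ ω) ∂μ ≤ Real.exp (c * u ^ 2 / 2)

/-- Extend an interior rank vector `(r_1, …, r_K)` to all integer indices, with the
boundary ranks equal to `1`. -/
def extRank {K : ℕ} (R : Fin K → ℕ) (k : ℕ) : ℕ :=
  if h : 1 ≤ k ∧ k ≤ K then R ⟨k - 1, by omega⟩ else 1

/-!
Each sweep step replaces the `j`-th sequential matricization `M` of the current iterate by a best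
approximation of rank `≤ r_j'`. Such an approximation is the orthogonal projection of `M` onto its
own column space, i.e. a linear map acting on the modes `1, …, j` only, so it does not increase
the ranks of the later matricizations; hence `M` still has rank `≤ r_j''`.

Let `λ_1 ≥ λ_2 ≥ ⋯` be the squared singular values of `M` and `h k = λ_1 + ⋯ + λ_k`. By the
Eckart–Young theorem the best approximation error is at most `h r_j'' - h r_j'` (that of the
truncated SVD), while `‖M - Y‖² ≥ h r_j'' - h r_j` for every `Y` of rank `≤ r_j` (by Ky Fan's
maximum principle). Since `h` is concave, the first bound is at most `β_j²` times the second.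
With the triangle inequality this gives `e_j ≤ (β_j + 1) e_{j-1} + β_j ‖Y - X‖` for
`e_j = ‖X_j - X‖`, which unrolls to the claim.
-/

open Finset Matrix

section AntitoneSequences

variable {lam : ℕ → ℝ}

theorem sum_mul_le_sum_range_of_antitone {N r : ℕ} {t : Fin N → ℝ} (hlam : Antitone lam)
    (hlam0 : ∀ i, 0 ≤ lam i) (ht0 : ∀ i, 0 ≤ t i) (ht1 : ∀ i, t i ≤ 1) (ht : ∑ i, t i ≤ r) :
    ∑ i : Fin N, lam i * t i ≤ ∑ i ∈ range r, lam i := by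
  set v := lam r
  have hterm (i : Fin N) : lam i * t i ≤ (if (i : ℕ) < r then lam i - v else 0) + v * t i := by
    split_ifs with h
    · nlinarith [hlam h.le, ht1 i]
    · nlinarith [hlam (not_lt.1 h), ht0 i]
  have hhead : ∑ i ∈ range N, (if i < r then lam i - v else 0) ≤ ∑ i ∈ range r, (lam i - v) := by
    rw [← sum_filter]
    refine sum_le_sum_of_subset_of_nonneg (fun i hi => ?_) fun i hi _ => ?_
    · simp only [mem_filter, mem_range] at hi ⊢
      exact hi.2
    · exact sub_nonneg.2 (hlam (mem_range.1 hi).le)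
  calc ∑ i : Fin N, lam i * t i
      ≤ ∑ i : Fin N, ((if (i : ℕ) < r then lam i - v else 0) + v * t i) :=
        sum_le_sum fun i _ => hterm i
    _ = ∑ i ∈ range N, (if i < r then lam i - v else 0) + v * ∑ i, t i := by
        rw [sum_add_distrib, ← mul_sum,
          Fin.sum_univ_eq_sum_range (fun i => if i < r then lam i - v else 0)]
    _ ≤ ∑ i ∈ range r, (lam i - v) + v * r := by
        gcongr
        exact hlam0 r
    _ = ∑ i ∈ range r, lam i := by
        rw [sum_sub_distrib, sum_const, card_range, nsmul_eq_mul]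
        ring

theorem mul_sum_Ico_le_of_antitone (hlam : Antitone lam) {a b c : ℕ} (hab : a ≤ b)
    (hbc : b ≤ c) :
    ((c : ℝ) - a) * ∑ i ∈ Ico b c, lam i ≤ ((c : ℝ) - b) * ∑ i ∈ Ico a c, lam i := by
  have hupper : ∑ i ∈ Ico b c, lam i ≤ ((c : ℝ) - b) * lam b := by
    have := sum_le_card_nsmul (Ico b c) lam (lam b) fun i hi => hlam (mem_Ico.1 hi).1
    rwa [Nat.card_Ico, nsmul_eq_mul, Nat.cast_sub hbc] at this
  have hlower : ((b : ℝ) - a) * lam b ≤ ∑ i ∈ Ico a b, lam i := by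
    have := card_nsmul_le_sum (Ico a b) lam (lam b) fun i hi => hlam (mem_Ico.1 hi).2.le
    rwa [Nat.card_Ico, nsmul_eq_mul, Nat.cast_sub hab] at this
  have hab' : (a : ℝ) ≤ b := by exact_mod_cast hab
  have hbc' : (b : ℝ) ≤ c := by exact_mod_cast hbc
  rw [← sum_Ico_consecutive lam hab hbc]
  nlinarith [mul_le_mul_of_nonneg_left hupper (sub_nonneg.2 hab'),
    mul_le_mul_of_nonneg_left hlower (sub_nonneg.2 hbc')]

theorem eq_zero_of_card_ne_zero_le {N ρ : ℕ} (hlam : Antitone lam) (hlam0 : ∀ i, 0 ≤ lam i)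
    (hN : ∀ i, N ≤ i → lam i = 0) (hcard : Fintype.card {k : Fin N // lam k ≠ 0} ≤ ρ) {i : ℕ}
    (hi : ρ ≤ i) : lam i = 0 := by
  classical
  by_contra hne
  have hpos : 0 < lam i := (hlam0 i).lt_of_ne' hne
  have hiN : i < N := by
    by_contra h
    exact hne (hN i (not_lt.1 h))
  have hsub : ({k | (k : ℕ) < i + 1} : Finset (Fin N)) ⊆ ({k | lam k ≠ 0} : Finset (Fin N)) := by
    intro k hk
    simp only [mem_filter, mem_univ, true_and] at hk ⊢
    exact (hpos.trans_le (hlam (Nat.lt_succ_iff.1 hk))).ne'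
  have := card_le_card hsub
  rw [Fin.card_filter_val_lt, ← Fintype.card_subtype] at this
  omega

end AntitoneSequences

section Frobenius

variable {I J K : Type*} [Fintype I] [Fintype J] [Fintype K]

theorem mfnormSq_nonneg (M : Matrix I J ℝ) : 0 ≤ mfnormSq M :=
  sum_nonneg fun _ _ => sum_nonneg fun _ _ => sq_nonneg _

theorem mfnormSq_eq_trace (M : Matrix I J ℝ) : mfnormSq M = trace (M * Mᵀ) := by
  simp [mfnormSq, trace, mul_apply, sq]

theorem mfnormSq_eq_zero_iff {M : Matrix I J ℝ} : mfnormSq M = 0 ↔ M = 0 := by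
  refine ⟨fun h => ?_, fun h => by simp [h, mfnormSq]⟩
  ext i j
  have hi := (sum_eq_zero_iff_of_nonneg fun i _ => sum_nonneg fun j _ => sq_nonneg (M i j)).1 h i
    (mem_univ i)
  exact pow_eq_zero_iff two_ne_zero |>.1
    ((sum_eq_zero_iff_of_nonneg fun j _ => sq_nonneg (M i j)).1 hi j (mem_univ j))

theorem mfnormSq_transpose (M : Matrix I J ℝ) : mfnormSq Mᵀ = mfnormSq M :=
  sum_comm

theorem mfnormSq_sub_comm (M N : Matrix I J ℝ) : mfnormSq (M - N) = mfnormSq (N - M) := by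
  simp only [mfnormSq, Matrix.sub_apply]
  exact sum_congr rfl fun _ _ => sum_congr rfl fun _ _ => by ring

theorem mfnormSq_mul_of_transpose_mul_self [DecidableEq I] {W : Matrix K I ℝ} (hW : Wᵀ * W = 1)
    (M : Matrix I J ℝ) : mfnormSq (W * M) = mfnormSq M := by
  rw [mfnormSq_eq_trace, mfnormSq_eq_trace, transpose_mul, ← Matrix.mul_assoc, trace_mul_comm]
  simp only [← Matrix.mul_assoc, hW, Matrix.one_mul]

theorem mfnormSq_diagonal_mul [DecidableEq I] (e : I → ℝ) (M : Matrix I J ℝ) :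
    mfnormSq (diagonal e * M) = ∑ i, e i ^ 2 * (M * Mᵀ) i i := by
  simp only [mfnormSq, diagonal_mul]
  simp only [mul_apply, transpose_apply, mul_sum]
  exact sum_congr rfl fun _ _ => sum_congr rfl fun _ _ => by ring

theorem mfnormSq_mul_add_mfnormSq_sub_mul [DecidableEq I] {P : Matrix I I ℝ} (hPt : Pᵀ = P)
    (hPP : P * P = P) (M : Matrix I J ℝ) :
    mfnormSq (P * M) + mfnormSq (M - P * M) = mfnormSq M := by
  have hQt : (1 - P)ᵀ = 1 - P := by rw [transpose_sub, transpose_one, hPt]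
  have hQQ : (1 - P) * (1 - P) = 1 - P := by
    rw [Matrix.sub_mul, Matrix.mul_sub, Matrix.mul_sub, hPP]
    simp
  have hproj (Q : Matrix I I ℝ) (hQt : Qᵀ = Q) (hQQ : Q * Q = Q) :
      mfnormSq (Q * M) = trace (Q * (M * Mᵀ)) := by
    rw [mfnormSq_eq_trace, transpose_mul, hQt, ← Matrix.mul_assoc, trace_mul_comm]
    simp only [← Matrix.mul_assoc, hQQ]
  rw [show M - P * M = (1 - P) * M by rw [Matrix.sub_mul, Matrix.one_mul], hproj P hPt hPP,
    hproj _ hQt hQQ, ← trace_add, ← Matrix.add_mul, add_sub_cancel, Matrix.one_mul,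
    mfnormSq_eq_trace]

theorem diag_le_one_of_mul_self_eq {P : Matrix I I ℝ} (hPt : Pᵀ = P) (hPP : P * P = P) (k : I) :
    P k k ≤ 1 := by
  have hsq : P k k = ∑ l, P k l ^ 2 := by
    conv_lhs => rw [← hPP]
    rw [mul_apply]
    refine sum_congr rfl fun l _ => ?_
    rw [sq, ← transpose_apply P l k, hPt]
  have : P k k ^ 2 ≤ P k k := hsq ▸ single_le_sum (fun l _ => sq_nonneg (P k l)) (mem_univ k)
  nlinarith

end Frobenius

theorem row_eq_zero_of_mul_transpose_eq_diagonal {I J : Type*} [Fintype J] [DecidableEq I]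
    {G : Matrix I J ℝ} {μ : I → ℝ} (hG : G * Gᵀ = diagonal μ) {i : I} (hi : μ i = 0) (b : J) :
    G i b = 0 := by
  have h := congrFun (congrFun hG i) i
  simp only [mul_apply, transpose_apply, diagonal_apply_eq, hi] at h
  exact mul_self_eq_zero.1 ((sum_eq_zero_iff_of_nonneg fun _ _ => mul_self_nonneg _).1 h b
    (mem_univ b))

section CoordinateProjection

def rowMask (N k : ℕ) : Matrix (Fin N) (Fin N) ℝ :=
  diagonal fun i => if (i : ℕ) < k then 1 else 0

theorem rowMask_transpose (N k : ℕ) : (rowMask N k)ᵀ = rowMask N k :=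
  diagonal_transpose _

theorem rowMask_mul_self (N k : ℕ) : rowMask N k * rowMask N k = rowMask N k := by
  simp only [rowMask, diagonal_mul_diagonal, mul_ite, mul_one, mul_zero]
  congr 1
  ext i
  split_ifs <;> rfl

theorem rank_rowMask_le (N k : ℕ) : (rowMask N k).rank ≤ k := by
  classical
  rw [rowMask, rank_diagonal, Fintype.card_subtype]
  simp only [ne_eq, ite_eq_right_iff, one_ne_zero, imp_false, not_not]
  rw [Fin.card_filter_val_lt]
  exact min_le_right _ _

variable {N k : ℕ} {J : Type*} [Fintype J] {G : Matrix (Fin N) J ℝ} {lam : ℕ → ℝ}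

theorem rowMask_mul_eq_self (hG : G * Gᵀ = diagonal fun i : Fin N => lam i)
    (hlam : ∀ i, k ≤ i → lam i = 0) : rowMask N k * G = G := by
  ext i b
  rw [rowMask, diagonal_mul]
  split_ifs with h
  · exact one_mul _
  · rw [zero_mul, row_eq_zero_of_mul_transpose_eq_diagonal hG (hlam i (not_lt.1 h))]

theorem mfnormSq_eq_sum_range (hG : G * Gᵀ = diagonal fun i : Fin N => lam i) :
    mfnormSq G = ∑ i ∈ range N, lam i := by
  rw [mfnormSq_eq_trace, hG, trace_diagonal, Fin.sum_univ_eq_sum_range]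

theorem mfnormSq_rowMask_mul (hG : G * Gᵀ = diagonal fun i : Fin N => lam i) (hk : k ≤ N) :
    mfnormSq (rowMask N k * G) = ∑ i ∈ range k, lam i := by
  rw [rowMask, mfnormSq_diagonal_mul, hG]
  simp only [diagonal_apply_eq, ite_pow, one_pow, ite_mul, one_mul, zero_pow two_ne_zero,
    zero_mul]
  rw [Fin.sum_univ_eq_sum_range (fun i => if i < k then lam i else 0), ← sum_filter]
  congr 1
  ext i
  simp only [mem_filter, mem_range]
  omega

end CoordinateProjection

section Spectral

theorem exists_orthogonal_mul_mul_transpose_eq_diagonal_eigenvalues₀ {m : Type*} [Fintype m]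
    [DecidableEq m] {S : Matrix m m ℝ} (hS : S.IsHermitian) :
    ∃ W : Matrix (Fin (Fintype.card m)) m ℝ, Wᵀ * W = 1 ∧ W * Wᵀ = 1 ∧
      W * S * Wᵀ = diagonal hS.eigenvalues₀ := by
  set U : Matrix m m ℝ := (hS.eigenvectorUnitary : Matrix m m ℝ)
  set e : Fin (Fintype.card m) ≃ m := Fintype.equivOfCardEq (Fintype.card_fin _)
  have hUU : U * Uᵀ = 1 := by
    simpa [star_eq_conjTranspose, conjTranspose_eq_transpose_of_trivial] using
      mem_unitaryGroup_iff.1 hS.eigenvectorUnitary.2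
  have hdiag : Uᵀ * S * U = diagonal hS.eigenvalues := by
    simpa [Unitary.conjStarAlgAut_star_apply, star_eq_conjTranspose,
      conjTranspose_eq_transpose_of_trivial, Function.comp_def] using
      hS.conjStarAlgAut_star_eigenvectorUnitary
  have hWt : (Uᵀ.submatrix e id)ᵀ = U.submatrix id e := by simp [transpose_submatrix]
  refine ⟨Uᵀ.submatrix e id, ?_, ?_, ?_⟩
  · rw [hWt, ← submatrix_mul _ _ _ _ _ e.bijective, hUU, submatrix_id_id]
  · rw [hWt, ← submatrix_mul _ _ _ _ _ Function.bijective_id, mul_eq_one_comm.1 hUU,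
      submatrix_one_equiv]
  · conv_lhs => rw [← submatrix_id_id S]
    rw [hWt, ← submatrix_mul _ _ _ _ _ Function.bijective_id,
      ← submatrix_mul _ _ _ _ _ Function.bijective_id, hdiag, submatrix_diagonal_equiv]
    congr 1
    ext k
    simp [e, IsHermitian.eigenvalues]

/-- `lam` lists the squared singular values of `A` in decreasing order, padded with zeros. -/
theorem exists_orthogonal_mul_mul_transpose_eq_diagonal {m n : Type*} [Fintype m] [Fintype n]
    [DecidableEq m] (A : Matrix m n ℝ) :
    ∃ (N : ℕ) (W : Matrix (Fin N) m ℝ) (lam : ℕ → ℝ), Wᵀ * W = 1 ∧ W * Wᵀ = 1 ∧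
      Antitone lam ∧ (∀ i, A.rank ≤ i → lam i = 0) ∧
      W * A * (W * A)ᵀ = diagonal fun i : Fin N => lam i := by
  classical
  have hS : (A * Aᵀ).IsHermitian := by
    simpa [conjTranspose_eq_transpose_of_trivial] using isHermitian_mul_conjTranspose_self A
  obtain ⟨W, hWW, hWW', hG⟩ := exists_orthogonal_mul_mul_transpose_eq_diagonal_eigenvalues₀ hS
  set μ := hS.eigenvalues₀
  replace hG : W * A * (W * A)ᵀ = diagonal μ := by
    rw [transpose_mul, ← hG]
    simp only [Matrix.mul_assoc]
  have hμ0 (k) : 0 ≤ μ k := by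
    have h := congrFun (congrFun hG k) k
    rw [diagonal_apply_eq, mul_apply] at h
    exact h ▸ sum_nonneg fun _ _ => mul_self_nonneg _
  set lam : ℕ → ℝ := fun i => if h : i < Fintype.card m then μ ⟨i, h⟩ else 0
  have hlam0 (i : ℕ) : 0 ≤ lam i := by
    simp only [lam]
    split_ifs
    exacts [hμ0 _, le_rfl]
  have hlamμ : (fun k : Fin _ => lam k) = μ := by
    ext k
    simp [lam, k.isLt]
  have hanti : Antitone lam := by
    intro i j hij
    simp only [lam]
    split_ifs with hj hi hi
    · exact hS.eigenvalues₀_antitone (Fin.mk_le_mk.2 hij)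
    · omega
    · exact hμ0 _
    · exact le_rfl
  have hrank : A.rank = Fintype.card {k : Fin (Fintype.card m) // lam k ≠ 0} := by
    have hWA : (W * A).rank = A.rank := by
      refine le_antisymm (rank_mul_le_right _ _) ?_
      calc A.rank = (Wᵀ * (W * A)).rank := by rw [← Matrix.mul_assoc, hWW, Matrix.one_mul]
        _ ≤ (W * A).rank := rank_mul_le_right _ _
    rw [← hWA, ← rank_self_mul_transpose, hG, ← hlamμ, rank_diagonal]
  refine ⟨_, W, lam, hWW, hWW', hanti, fun i hi => ?_, by rw [hG, hlamμ]⟩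
  refine eq_zero_of_card_ne_zero_le hanti hlam0 (fun l hl => ?_) hrank.ge hi
  simp [lam, not_lt.2 hl]

end Spectral

section KyFan

/-- Normalizing the nonzero columns of `Q` gives a partial isometry `Q'`. -/
theorem exists_eq_mul_diagonal_sqrt {I J : Type*} [Fintype I] [Fintype J] [DecidableEq J]
    {Q : Matrix I J ℝ} {μ : J → ℝ} (hμ0 : ∀ j, 0 ≤ μ j) (hQ : Qᵀ * Q = diagonal μ) :
    ∃ Q' : Matrix I J ℝ, Q = Q' * diagonal (fun j => √(μ j)) ∧ (∀ j, (Q'ᵀ * Q') j j ≤ 1) ∧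
      Q' * Q'ᵀ * (Q' * Q'ᵀ) = Q' * Q'ᵀ := by
  set e : J → ℝ := fun j => if μ j = 0 then 0 else 1
  have hcol {j : J} (hj : μ j = 0) (i : I) : Q i j = 0 :=
    row_eq_zero_of_mul_transpose_eq_diagonal (G := Qᵀ) (by rwa [transpose_transpose]) hj i
  obtain ⟨Q', hQ'⟩ : ∃ Q', Q' = Q * diagonal fun j => (√(μ j))⁻¹ := ⟨_, rfl⟩
  have hQ'Q' : Q'ᵀ * Q' = diagonal e := by
    rw [hQ', transpose_mul, diagonal_transpose, Matrix.mul_assoc, ← Matrix.mul_assoc Qᵀ, hQ,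
      diagonal_mul_diagonal, diagonal_mul_diagonal]
    congr 1
    ext j
    by_cases hj : μ j = 0
    · simp [e, hj]
    · rw [show e j = 1 from if_neg hj, show (√(μ j))⁻¹ * (μ j * (√(μ j))⁻¹) = μ j / √(μ j) ^ 2
        by ring, Real.sq_sqrt (hμ0 j), div_self hj]
  refine ⟨Q', ?_, fun j => ?_, ?_⟩
  · ext i j
    simp only [hQ', mul_diagonal]
    by_cases hj : μ j = 0
    · simp [hcol hj]
    · rw [mul_assoc, inv_mul_cancel₀ (Real.sqrt_ne_zero'.2 ((hμ0 j).lt_of_ne' hj)), mul_one]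
  · rw [hQ'Q', diagonal_apply_eq]
    simp only [e]
    split_ifs <;> norm_num
  · have hQ'e : Q' * diagonal e = Q' := by
      ext i j
      by_cases hj : μ j = 0 <;> simp [hQ', e, mul_diagonal, hj]
    rw [Matrix.mul_assoc, ← Matrix.mul_assoc Q'ᵀ, hQ'Q', ← Matrix.mul_assoc, hQ'e]

/-- Ky Fan's maximum principle. -/
theorem mfnormSq_rowMask_mul_le {M N r : ℕ} {Q : Matrix (Fin M) (Fin N) ℝ} {lam : ℕ → ℝ}
    (hlam : Antitone lam) (hlam0 : ∀ i, 0 ≤ lam i)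
    (hQ : Qᵀ * Q = diagonal fun i : Fin N => lam i) :
    mfnormSq (rowMask M r * Q) ≤ ∑ i ∈ range r, lam i := by
  obtain ⟨Q', hQfac, hQ'Q', hPP⟩ := exists_eq_mul_diagonal_sqrt (μ := fun i : Fin N => lam i)
    (fun i => hlam0 i) hQ
  set d : Fin M → ℝ := fun k => if (k : ℕ) < r then 1 else 0
  have hd0 (k : Fin M) : 0 ≤ d k := by simp only [d]; split_ifs <;> norm_num
  have hd1 (k : Fin M) : d k ≤ 1 := by simp only [d]; split_ifs <;> norm_num
  set t : Fin N → ℝ := fun i => (Q'ᵀ * rowMask M r * Q') i i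
  have ht (i : Fin N) : t i = ∑ k, d k * Q' k i ^ 2 := by
    simp only [t, rowMask]
    rw [mul_apply]
    simp only [mul_diagonal, transpose_apply]
    exact sum_congr rfl fun k _ => by ring
  have hnorm : mfnormSq (rowMask M r * Q) = ∑ i : Fin N, lam i * t i := by
    rw [← mfnormSq_transpose, transpose_mul, rowMask_transpose, hQfac, transpose_mul,
      diagonal_transpose, Matrix.mul_assoc, mfnormSq_diagonal_mul]
    refine sum_congr rfl fun i _ => ?_
    rw [Real.sq_sqrt (hlam0 i), transpose_mul, rowMask_transpose, transpose_transpose,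
      Matrix.mul_assoc, ← Matrix.mul_assoc (rowMask M r), rowMask_mul_self, ← Matrix.mul_assoc]
  have ht0 (i : Fin N) : 0 ≤ t i :=
    ht i ▸ sum_nonneg fun k _ => mul_nonneg (hd0 k) (sq_nonneg _)
  have ht1 (i : Fin N) : t i ≤ 1 := by
    calc t i ≤ ∑ k, Q' k i ^ 2 :=
          ht i ▸ sum_le_sum fun k _ => mul_le_of_le_one_left (sq_nonneg _) (hd1 k)
      _ = (Q'ᵀ * Q') i i := by
          rw [mul_apply]
          exact sum_congr rfl fun k _ => by rw [transpose_apply, sq]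
      _ ≤ 1 := hQ'Q' i
  have hsum : ∑ i, t i ≤ r := by
    calc ∑ i, t i = trace (Q' * Q'ᵀ * rowMask M r) := by
          rw [show ∑ i, t i = trace (Q'ᵀ * rowMask M r * Q') from rfl, trace_mul_comm,
            ← Matrix.mul_assoc]
      _ = ∑ k, (Q' * Q'ᵀ) k k * d k := by simp [trace, rowMask, mul_diagonal, d]
      _ ≤ ∑ k, d k := sum_le_sum fun k _ => mul_le_of_le_one_left (hd0 k)
            (diag_le_one_of_mul_self_eq (by rw [transpose_mul, transpose_transpose]) hPP k)
      _ ≤ r := by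
          simp only [d, sum_boole, Fin.card_filter_val_lt]
          exact_mod_cast min_le_right _ _
  exact hnorm ▸ sum_mul_le_sum_range_of_antitone hlam hlam0 ht0 ht1 hsum

end KyFan

section EckartYoung

variable {m n : Type*} [Fintype m] [Fintype n] [DecidableEq m] {N : ℕ} {A : Matrix m n ℝ}
  {W : Matrix (Fin N) m ℝ} {lam : ℕ → ℝ}

theorem exists_rank_le_mfnormSq_sub_eq (hW : Wᵀ * W = 1) (hW' : W * Wᵀ = 1)
    (hG : W * A * (W * A)ᵀ = diagonal fun i : Fin N => lam i) {k : ℕ} (hk : k ≤ N) :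
    ∃ C : Matrix m n ℝ, C.rank ≤ k ∧
      mfnormSq (A - C) = ∑ i ∈ range N, lam i - ∑ i ∈ range k, lam i := by
  refine ⟨Wᵀ * (rowMask N k * (W * A)),
    (rank_mul_le_right _ _).trans ((rank_mul_le_left _ _).trans (rank_rowMask_le N k)), ?_⟩
  rw [← mfnormSq_mul_of_transpose_mul_self hW, Matrix.mul_sub, ← Matrix.mul_assoc W Wᵀ, hW',
    Matrix.one_mul, ← mfnormSq_eq_sum_range hG, ← mfnormSq_rowMask_mul hG hk,
    ← mfnormSq_mul_add_mfnormSq_sub_mul (rowMask_transpose N k) (rowMask_mul_self N k) (W * A)]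
  ring

/-- The lower bound of the Eckart–Young theorem. -/
theorem sum_range_sub_le_mfnormSq_sub (hW : Wᵀ * W = 1) (hlam : Antitone lam)
    (hlam0 : ∀ i, 0 ≤ lam i) (hG : W * A * (W * A)ᵀ = diagonal fun i : Fin N => lam i)
    {B : Matrix m n ℝ} {r : ℕ} (hB : B.rank ≤ r) :
    ∑ i ∈ range N, lam i - ∑ i ∈ range r, lam i ≤ mfnormSq (A - B) := by
  classical
  -- rotate the columns so that `W * B` lives on the first `r` coordinates
  obtain ⟨N₂, W₂, ν, hW₂, -, -, hν, hdiag₂⟩ :=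
    exists_orthogonal_mul_mul_transpose_eq_diagonal (W * B)ᵀ
  set Q := W₂ * (W * A)ᵀ
  set X := W₂ * (W * B)ᵀ
  have hX : rowMask N₂ r * X = X := by
    refine rowMask_mul_eq_self hdiag₂ fun i hi => hν i ?_
    rw [rank_transpose]
    exact ((rank_mul_le_right _ _).trans hB).trans hi
  have hQ : Qᵀ * Q = diagonal fun i : Fin N => lam i := by
    rw [transpose_mul, transpose_transpose, Matrix.mul_assoc, ← Matrix.mul_assoc W₂ᵀ, hW₂,
      Matrix.one_mul, hG]
  have hAB : mfnormSq (A - B) = mfnormSq (Q - X) := by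
    rw [← mfnormSq_mul_of_transpose_mul_self hW, ← mfnormSq_transpose,
      ← mfnormSq_mul_of_transpose_mul_self hW₂, Matrix.mul_sub, transpose_sub, Matrix.mul_sub]
  have hQ_norm : mfnormSq Q = ∑ i ∈ range N, lam i := by
    rw [← mfnormSq_transpose]
    exact mfnormSq_eq_sum_range (by rwa [transpose_transpose])
  have hsplit := mfnormSq_mul_add_mfnormSq_sub_mul (rowMask_transpose N₂ r)
    (rowMask_mul_self N₂ r) (Q - X)
  have hsplitQ := mfnormSq_mul_add_mfnormSq_sub_mul (rowMask_transpose N₂ r)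
    (rowMask_mul_self N₂ r) Q
  rw [show Q - X - rowMask N₂ r * (Q - X) = Q - rowMask N₂ r * Q by
    rw [Matrix.mul_sub, hX]; abel] at hsplit
  linarith [mfnormSq_rowMask_mul_le (r := r) hlam hlam0 hQ,
    mfnormSq_nonneg (rowMask N₂ r * (Q - X))]

/-- Both halves of the Eckart–Young theorem, combined through the concavity of the partial sums
of the squared singular values of `A`. -/
theorem exists_rank_le_mul_mfnormSq_sub_le {A B : Matrix m n ℝ} {r k r'' : ℕ}
    (hA : A.rank ≤ r'') (hB : B.rank ≤ r) (hrk : r ≤ k) (hkr : k ≤ r'') :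
    ∃ C : Matrix m n ℝ, C.rank ≤ k ∧
      ((r'' : ℝ) - r) * mfnormSq (A - C) ≤ ((r'' : ℝ) - k) * mfnormSq (A - B) := by
  have hk : (0 : ℝ) ≤ (r'' : ℝ) - k := sub_nonneg.2 (by exact_mod_cast hkr)
  by_cases hAk : A.rank ≤ k
  · refine ⟨A, hAk, ?_⟩
    rw [sub_self, mfnormSq_eq_zero_iff.2 rfl, mul_zero]
    exact mul_nonneg hk (mfnormSq_nonneg _)
  obtain ⟨N, W, lam, hW, hW', hlam, hzero, hG⟩ := exists_orthogonal_mul_mul_transpose_eq_diagonal A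
  have hlam0 (i : ℕ) : 0 ≤ lam i :=
    hzero (max i A.rank) (le_max_right _ _) ▸ hlam (le_max_left _ _)
  have hAN : A.rank ≤ N := by
    calc A.rank = (Wᵀ * (W * A)).rank := by rw [← Matrix.mul_assoc, hW, Matrix.one_mul]
      _ ≤ (W * A).rank := rank_mul_le_right _ _
      _ ≤ N := (rank_le_card_height _).trans (Fintype.card_fin N).le
  obtain ⟨C, hC, hAC⟩ := exists_rank_le_mfnormSq_sub_eq hW hW' hG (k := k) (by omega)
  refine ⟨C, hC, ?_⟩
  have hlower := sum_range_sub_le_mfnormSq_sub hW hlam hlam0 hG hB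
  have hconcave := mul_sum_Ico_le_of_antitone hlam hrk hkr
  rw [sum_Ico_eq_sub _ (hrk.trans hkr), sum_Ico_eq_sub _ hkr,
    eventually_constant_sum (fun i hi => hzero i hi) hA,
    ← eventually_constant_sum (fun i hi => hzero i hi) hAN] at hconcave
  rw [hAC]
  nlinarith [mul_le_mul_of_nonneg_left hlower hk]

end EckartYoung

def IsBestRankApprox {I J : Type*} [Fintype I] [Fintype J] (k : ℕ) (M Z : Matrix I J ℝ) :
    Prop :=
  Z.rank ≤ k ∧ ∀ C : Matrix I J ℝ, C.rank ≤ k → mfnormSq (Z - M) ≤ mfnormSq (C - M)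

namespace IsBestRankApprox

variable {I J : Type*} [Fintype I] [Fintype J] [DecidableEq I] {k : ℕ} {M Z : Matrix I J ℝ}

theorem mul_mfnormSq_sub_le (hZ : IsBestRankApprox k M Z) {B : Matrix I J ℝ} {r r'' : ℕ}
    (hM : M.rank ≤ r'') (hB : B.rank ≤ r) (hrk : r ≤ k) (hkr : k ≤ r'') :
    ((r'' : ℝ) - r) * mfnormSq (Z - M) ≤ ((r'' : ℝ) - k) * mfnormSq (M - B) := by
  obtain ⟨C, hC, hMC⟩ := exists_rank_le_mul_mfnormSq_sub_le hM hB hrk hkr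
  have hr : (0 : ℝ) ≤ (r'' : ℝ) - r := sub_nonneg.2 (by exact_mod_cast hrk.trans hkr)
  rw [mfnormSq_sub_comm M C] at hMC
  exact (mul_le_mul_of_nonneg_left (hZ.2 C hC) hr).trans hMC

/-- Projecting `M` orthogonally onto the column space of `Z` gives a competitor of rank `≤ k`
which, by Pythagoras, is strictly closer to `M` than `Z` unless it equals `Z`. -/
theorem exists_eq_mul (hZ : IsBestRankApprox k M Z) : ∃ P : Matrix I I ℝ, Z = P * M := by
  obtain ⟨N, W, ν, hW, hW', -, hν, hdiag⟩ := exists_orthogonal_mul_mul_transpose_eq_diagonal Z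
  set D := rowMask N k
  have hDZ : D * (W * Z) = W * Z := rowMask_mul_eq_self hdiag fun i hi => hν i (hZ.1.trans hi)
  have hC : (Wᵀ * (D * (W * M))).rank ≤ k :=
    (rank_mul_le_right _ _).trans ((rank_mul_le_left _ _).trans (rank_rowMask_le N k))
  have hZM : mfnormSq (Z - M) =
      mfnormSq (D * (W * Z - W * M)) + mfnormSq (D * (W * M) - W * M) := by
    rw [← mfnormSq_mul_of_transpose_mul_self hW (Z - M), Matrix.mul_sub,
      ← mfnormSq_mul_add_mfnormSq_sub_mul (rowMask_transpose N k) (rowMask_mul_self N k)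
        (W * Z - W * M), Matrix.mul_sub D, hDZ]
    congr 2
    abel
  have hCM : mfnormSq (Wᵀ * (D * (W * M)) - M) = mfnormSq (D * (W * M) - W * M) := by
    rw [← mfnormSq_mul_of_transpose_mul_self hW, Matrix.mul_sub, ← Matrix.mul_assoc W Wᵀ, hW',
      Matrix.one_mul]
  have hzero : D * (W * Z - W * M) = 0 := mfnormSq_eq_zero_iff.1 <|
    le_antisymm (by linarith [hZ.2 _ hC]) (mfnormSq_nonneg _)
  rw [Matrix.mul_sub, sub_eq_zero, hDZ] at hzero
  refine ⟨Wᵀ * D * W, ?_⟩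
  rw [← Matrix.one_mul Z, ← hW, Matrix.mul_assoc, hzero]
  simp only [Matrix.mul_assoc]

end IsBestRankApprox

section Matricization

variable {d : ℕ} (p : Fin d → ℕ)

abbrev seqMatIdxEquiv (k : ℕ) :
    ((j : Fin d) → Fin (p j)) ≃ ((j : {j : Fin d // j.val < k}) → Fin (p j.1)) ×
      ((j : {j : Fin d // ¬ j.val < k}) → Fin (p j.1)) :=
  Equiv.piEquivPiSubtypeProd (fun j : Fin d => j.val < k) fun j => Fin (p j)

theorem seqMat_apply (k : ℕ) (X : Tensor p) (a) (b) :
    seqMat p k X a b = X ((seqMatIdxEquiv p k).symm (a, b)) :=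
  rfl

theorem seqMat_sub (k : ℕ) (X Y : Tensor p) :
    seqMat p k (X - Y) = seqMat p k X - seqMat p k Y :=
  rfl

theorem seqMat_surjective (k : ℕ) : Function.Surjective (seqMat p k) := fun M =>
  ⟨fun i => M (seqMatIdxEquiv p k i).1 (seqMatIdxEquiv p k i).2, by
    ext a b
    simp only [seqMat_apply, Equiv.apply_symm_apply]⟩

theorem fnorm_eq_sqrt_mfnormSq_seqMat (k : ℕ) (X : Tensor p) :
    fnorm X = √(mfnormSq (seqMat p k X)) := by
  rw [fnorm, ← (seqMatIdxEquiv p k).symm.sum_comp, Fintype.sum_prod_type]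
  rfl

theorem fnorm_eq_norm (X : Tensor p) :
    fnorm X = ‖(WithLp.toLp 2 X : EuclideanSpace ℝ ((k : Fin d) → Fin (p k)))‖ := by
  simp [EuclideanSpace.norm_eq, fnorm]

theorem fnorm_sub_comm (X Y : Tensor p) : fnorm (X - Y) = fnorm (Y - X) := by
  rw [fnorm_eq_norm, fnorm_eq_norm, WithLp.toLp_sub, WithLp.toLp_sub, norm_sub_rev]

theorem fnorm_sub_le (X Y Z : Tensor p) : fnorm (X - Z) ≤ fnorm (X - Y) + fnorm (Y - Z) := by
  simp only [fnorm_eq_norm, WithLp.toLp_sub]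
  exact norm_sub_le_norm_sub_add_norm_sub _ _ _

variable {p}

theorem isBestRankApprox_seqMat {k r : ℕ} {A Z : Tensor p} (hZ : (seqMat p k Z).rank ≤ r)
    (hmin : ∀ Z' : Tensor p, (seqMat p k Z').rank ≤ r → fnorm (Z - A) ≤ fnorm (Z' - A)) :
    IsBestRankApprox r (seqMat p k A) (seqMat p k Z) := by
  refine ⟨hZ, fun C hC => ?_⟩
  obtain ⟨Z', rfl⟩ := seqMat_surjective p k C
  have h := hmin Z' hC
  rwa [fnorm_eq_sqrt_mfnormSq_seqMat p k, fnorm_eq_sqrt_mfnormSq_seqMat p k, seqMat_sub,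
    seqMat_sub, Real.sqrt_le_sqrt_iff (mfnormSq_nonneg _)] at h

/-- `B` arises from `A` by a linear map acting on the modes `1, …, k`, so every row of the `j`-th
matricization of `B` is a linear combination of rows of that of `A`. -/
theorem rank_seqMat_le_of_seqMat_eq_mul {k j : ℕ} (hkj : k ≤ j) {A B : Tensor p}
    {P : Matrix ((s : {s : Fin d // s.val < k}) → Fin (p s.1))
      ((s : {s : Fin d // s.val < k}) → Fin (p s.1)) ℝ}
    (h : seqMat p k B = P * seqMat p k A) :
    (seqMat p j B).rank ≤ (seqMat p j A).rank := by
  classical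
  let res (a : (s : {s : Fin d // s.val < j}) → Fin (p s.1)) :
      (s : {s : Fin d // s.val < k}) → Fin (p s.1) :=
    fun s => a ⟨s.1, s.2.trans_le hkj⟩
  let upd (a : (s : {s : Fin d // s.val < j}) → Fin (p s.1))
      (u : (s : {s : Fin d // s.val < k}) → Fin (p s.1)) :
      (s : {s : Fin d // s.val < j}) → Fin (p s.1) :=
    fun s => if hs : s.1.val < k then u ⟨s.1, hs⟩ else a s
  have hrow (a) : seqMat p j B a = ∑ u, P (res a) u • seqMat p j A (upd a u) := by
    ext b
    let c : (s : {s : Fin d // ¬ s.val < k}) → Fin (p s.1) :=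
      fun s => (seqMatIdxEquiv p j).symm (a, b) s.1
    have hB : seqMat p j B a b = seqMat p k B (res a) c := by
      simp only [seqMat_apply]
      congr 1
      funext s
      simp only [c, res, Equiv.piEquivPiSubtypeProd, Equiv.coe_fn_symm_mk]
      split_ifs <;> first | rfl | omega
    have hA (u) : seqMat p j A (upd a u) b = seqMat p k A u c := by
      simp only [seqMat_apply]
      congr 1
      funext s
      simp only [c, upd, Equiv.piEquivPiSubtypeProd, Equiv.coe_fn_symm_mk]
      split_ifs <;> first | rfl | omega
    rw [hB, h, mul_apply, Finset.sum_apply]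
    simp only [Pi.smul_apply, smul_eq_mul, hA]
  rw [rank_eq_finrank_span_row, rank_eq_finrank_span_row]
  refine Submodule.finrank_mono (Submodule.span_le.2 ?_)
  rintro _ ⟨a, rfl⟩
  change seqMat p j B a ∈ Submodule.span ℝ (Set.range (seqMat p j A).row)
  rw [hrow]
  exact Submodule.sum_mem _ fun u _ => Submodule.smul_mem _ _ (Submodule.subset_span ⟨_, rfl⟩)

theorem fnorm_sub_le_sqrt_mul_of_isBestRankApprox {k r r' r'' : ℕ} {A Y Z : Tensor p}
    (hZ : IsBestRankApprox r' (seqMat p k A) (seqMat p k Z)) (hA : (seqMat p k A).rank ≤ r'')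
    (hY : (seqMat p k Y).rank ≤ r) (h1 : r < r') (h2 : r' ≤ r'') :
    fnorm (Z - A) ≤ √(((r'' : ℝ) - r') / ((r'' : ℝ) - r)) * fnorm (A - Y) := by
  have hpos : (0 : ℝ) < (r'' : ℝ) - r := sub_pos.2 (by exact_mod_cast h1.trans_le h2)
  have hnum : (0 : ℝ) ≤ (r'' : ℝ) - r' := sub_nonneg.2 (by exact_mod_cast h2)
  rw [fnorm_eq_sqrt_mfnormSq_seqMat p k, fnorm_eq_sqrt_mfnormSq_seqMat p k, seqMat_sub,
    seqMat_sub, ← Real.sqrt_mul (div_nonneg hnum hpos.le), div_mul_eq_mul_div]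
  refine Real.sqrt_le_sqrt ((le_div_iff₀ hpos).2 ?_)
  rw [mul_comm]
  exact hZ.mul_mfnormSq_sub_le hA hY h1.le h2

theorem fnorm_sub_le_of_fnorm_sub_le_mul {β : ℝ} (hβ : 0 ≤ β) {A X Y Z : Tensor p}
    (h : fnorm (Z - A) ≤ β * fnorm (A - Y)) :
    fnorm (Z - X) ≤ (β + 1) * fnorm (A - X) + β * fnorm (Y - X) := by
  have hZ := fnorm_sub_le p Z A X
  have hY := fnorm_sub_le p A X Y
  rw [fnorm_sub_comm p X Y] at hY
  nlinarith [mul_le_mul_of_nonneg_left hY hβ]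

end Matricization

theorem le_prod_add_one_sub_one_mul {e β : ℕ → ℝ} {δ : ℝ} {n : ℕ} (hβ : ∀ i, 0 ≤ β i)
    (he0 : e 0 = 0) (hstep : ∀ j < n, e (j + 1) ≤ (β (j + 1) + 1) * e j + β (j + 1) * δ) :
    e n ≤ ((∏ i ∈ Icc 1 n, (β i + 1)) - 1) * δ := by
  induction n with
  | zero => simp [he0]
  | succ n ih =>
    have hn := ih fun j hj => hstep j (by omega)
    rw [prod_Icc_succ_top (by omega)]
    nlinarith [hstep n n.lt_succ_self, mul_le_mul_of_nonneg_left hn (by linarith [hβ (n + 1)] :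
      (0 : ℝ) ≤ β (n + 1) + 1)]

/-- **Lemma A.5 (contractive projection property).** Let `Θ(r_1,…,r_{d−1})` be the set
of tensors in `ℝ^{p_1×⋯×p_d}` whose `j`-th sequential matricization has rank at most
`r_j` for all `j`.  Suppose `X ∈ Θ(r'')`, `Y ∈ Θ(r)`, `r_i < r_i' < r_i''` for all
`i`, and the approximate projection of `X` onto `Θ(r')` is computed by the sequence
`Xs 0 = X`, where for `j = 1,…,d−1` the tensor `Xs j` is a best approximation of
`Xs (j−1)` among tensors whose `j`-th sequential matricization has rank at most `r_j'`
(as given by the truncated SVD).  Then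
`‖Xs (d−1) − X‖_F ≤ (∏_{i=1}^{d−1}(β_i+1) − 1)·‖Y − X‖_F` with
`β_i = √((r_i''−r_i')/(r_i''−r_i))`. -/
theorem statement11 {d : ℕ} (p : Fin d → ℕ)
    (rk rk' rk'' : ℕ → ℕ)
    (hlt : ∀ i, 1 ≤ i → i ≤ d - 1 → rk i < rk' i ∧ rk' i < rk'' i)
    (X Y : Tensor p)
    (hX : ∀ i, 1 ≤ i → i ≤ d - 1 → Matrix.rank (seqMat p i X) ≤ rk'' i)
    (hY : ∀ i, 1 ≤ i → i ≤ d - 1 → Matrix.rank (seqMat p i Y) ≤ rk i)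
    (Xs : ℕ → Tensor p) (h0 : Xs 0 = X)
    (hproj : ∀ j, 1 ≤ j → j ≤ d - 1 →
      Matrix.rank (seqMat p j (Xs j)) ≤ rk' j ∧
      ∀ Z : Tensor p, Matrix.rank (seqMat p j Z) ≤ rk' j →
        fnorm (Xs j - Xs (j - 1)) ≤ fnorm (Z - Xs (j - 1))) :
    fnorm (Xs (d - 1) - X) ≤
      ((∏ i ∈ Finset.Icc 1 (d - 1),
          (Real.sqrt (((rk'' i : ℝ) - rk' i) / ((rk'' i : ℝ) - rk i)) + 1)) - 1) *
        fnorm (Y - X) := by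
  have hbest (j : ℕ) (h1 : 1 ≤ j) (h2 : j ≤ d - 1) :
      IsBestRankApprox (rk' j) (seqMat p j (Xs (j - 1))) (seqMat p j (Xs j)) :=
    isBestRankApprox_seqMat (hproj j h1 h2).1 (hproj j h1 h2).2
  have hrank (t j : ℕ) (htj : t ≤ j) (h1 : 1 ≤ j) (h2 : j ≤ d - 1) :
      (seqMat p j (Xs t)).rank ≤ rk'' j := by
    induction t with
    | zero => exact h0 ▸ hX j h1 h2
    | succ t ih =>
      obtain ⟨P, hP⟩ := (hbest (t + 1) (by omega) (by omega)).exists_eq_mul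
      exact (rank_seqMat_le_of_seqMat_eq_mul htj hP).trans (ih (by omega))
  refine le_prod_add_one_sub_one_mul (e := fun j => fnorm (Xs j - X))
    (fun i => Real.sqrt_nonneg _) (by simp [h0, fnorm]) fun j hj => ?_
  obtain ⟨h1, h2⟩ := hlt (j + 1) (by omega) (by omega)
  have hstep := fnorm_sub_le_sqrt_mul_of_isBestRankApprox (hbest (j + 1) (by omega) (by omega))
    (hrank j (j + 1) (by omega) (by omega) (by omega)) (hY (j + 1) (by omega) (by omega)) h1 h2.le
  rw [Nat.add_sub_cancel] at hstep
  exact fnorm_sub_le_of_fnorm_sub_le_mul (Real.sqrt_nonneg _) hstep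

end TTpaper
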